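/- Let Γ ≤ Λ be groups such that Λ commensurates Γ: for every λ ∈ Λ, the subgroup Γ ∩ λ⁻¹Γλ has finite index in Γ. Let ρ : Λ → Homeo₊(S¹) be a homomorphism whose action on the circle is minimal and strongly proximal, and assume every ρ(Γ)-orbit in S¹ is infinite. Then the restricted action ρ|_Γ : Γ → Homeo₊(S¹) is also minimal and strongly proximal. -/

import Mathlib

noncomputable section

open MeasureTheory Set Function
open scoped ENNReal

/-- The group of self-homeomorphisms of a topological space, under composition. -/
instance homeoGroup {X : Type*} [TopologicalSpace X] : Group (X ≃ₜ X) where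
  mul f g := g.trans f
  one := Homeomorph.refl X
  inv := Homeomorph.symm
  mul_assoc f g h := rfl
  one_mul f := by ext x; rfl
  mul_one f := by ext x; rfl
  inv_mul_cancel f := by ext x; exact f.symm_apply_apply x

@[simp] lemma homeo_mul_apply {X : Type*} [TopologicalSpace X] (f g : X ≃ₜ X) (x : X) :
    (f * g) x = f (g x) := rfl

/-- The circle `S¹ = ℝ/ℤ`. -/
abbrev Circle' := UnitAddCircle

/-- A homeomorphism of the circle `ℝ/ℤ` is orientation-preserving if it lifts to a strictly
increasing homeomorphism `F` of `ℝ` with `F (x + 1) = F x + 1`. -/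
def IsOrientationPreserving (h : Circle' ≃ₜ Circle') : Prop :=
  ∃ F : ℝ ≃ₜ ℝ, StrictMono F ∧ (∀ x : ℝ, F (x + 1) = F x + 1) ∧
    ∀ x : ℝ, h (x : Circle') = ((F x : ℝ) : Circle')

/-- An action on the circle is minimal and strongly proximal if every proper closed subset
can be moved inside any nonempty open subset by some group element. -/
def IsMinimalStronglyProximal {Γ : Type*} [Group Γ] (ρ : Γ →* (Circle' ≃ₜ Circle')) : Prop :=
  ∀ K : Set Circle', IsClosed K → K ≠ Set.univ → ∀ U : Set Circle', IsOpen U → U.Nonempty →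
    ∃ γ : Γ, (ρ γ) '' K ⊆ U

/-!
Call `S ⊆ S¹` compressible if elements of `Γ` map it to sets of arbitrarily small diameter.
Commensuration makes compressibility invariant under `Λ` (pass to the finite-index subgroup
`Γ ∩ l⁻¹ Γ l`), so by strong proximality of `Λ` either every proper closed set is compressible or
no nonempty open ball is.

In the first case, compress the complement `C` of a ball inside `U` to a tiny set. As `Γ` has no
global fixed point, all small balls can be displaced by `Γ` at a uniform scale, so a compressed
copy of `K` can be moved off the compressed `C`, that is, into `U`.

In the second case, orientation forces `Γ` to act equicontinuously. Then finite-index subgroups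
of `Γ` have dense orbits: a proper orbit closure pushed into a short arc by `Λ` would have its
leftmost point fixed by a finite-index subgroup of `Γ`, giving a finite `Γ`-orbit. Density and
strong proximality then yield an element of `Λ` shrinking all balls of a fixed radius, which no
surjection of the circle can do.
-/

open Metric Topology

lemma homeo_mul_image {X : Type*} [TopologicalSpace X] (f g : X ≃ₜ X) (S : Set X) :
    ⇑(f * g) '' S = f '' (g '' S) :=
  (image_image f g S).symm

lemma homeo_inv_image_image {X : Type*} [TopologicalSpace X] (f : X ≃ₜ X) (S : Set X) :
    ⇑f⁻¹ '' (f '' S) = S :=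
  f.symm_image_image S

lemma homeo_inv_image_subset_iff {X : Type*} [TopologicalSpace X] (f : X ≃ₜ X) {S T : Set X} :
    ⇑f⁻¹ '' S ⊆ T ↔ S ⊆ f '' T := by
  rw [image_subset_iff, ← Homeomorph.preimage_symm]
  rfl

lemma UniformEquicontinuous.exists_forall_diam_image_lt {ι X Y : Type*} [PseudoMetricSpace X]
    [PseudoMetricSpace Y] {F : ι → X → Y} (hF : UniformEquicontinuous F) {ε : ℝ} (hε : 0 < ε) :
    ∃ δ > 0, ∀ i S, Bornology.IsBounded S → diam S < δ → diam (F i '' S) < ε := by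
  obtain ⟨δ, hδ, h⟩ := Metric.uniformEquicontinuous_iff.mp hF (ε / 2) (half_pos hε)
  refine ⟨δ, hδ, fun i S hS hSδ => ?_⟩
  refine (diam_le_of_forall_dist_le (half_pos hε).le ?_).trans_lt (half_lt_self hε)
  rintro _ ⟨x, hx, rfl⟩ _ ⟨y, hy, rfl⟩
  exact (h x y ((dist_le_diam_of_mem hS hx hy).trans_lt hSδ) i).le

lemma uniformEquicontinuous_of_finite {ι X : Type*} [Finite ι] [UniformSpace X] [CompactSpace X]
    (f : ι → X ≃ₜ X) : UniformEquicontinuous fun i => ⇑(f i) :=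
  uniformEquicontinuous_finite.2 fun i =>
    CompactSpace.uniformContinuous_of_continuous (f i).continuous

/-- Lebesgue number argument: disjoint neighbourhoods of `x` and `f i x`, pulled back by `f i`,
cover the space. -/
lemma exists_forall_exists_disjoint_image_ball {ι X : Type*} [MetricSpace X] [CompactSpace X]
    (f : ι → X → X) (hf : ∀ i, Continuous (f i)) (hmove : ∀ x, ∃ i, f i x ≠ x) :
    ∃ e > 0, ∀ q, ∃ i, Disjoint (f i '' ball q e) (ball q e) := by
  choose i hi using hmove
  choose u v hu hv hxu hxv huv using fun x => t2_separation (hi x).symm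
  obtain ⟨e, he, hcov⟩ := lebesgue_number_lemma_of_metric (c := fun x => u x ∩ f (i x) ⁻¹' v x)
    isCompact_univ (fun x => (hu x).inter ((hv x).preimage (hf _)))
    (fun x _ => mem_iUnion.2 ⟨x, hxu x, hxv x⟩)
  refine ⟨e, he, fun q => ?_⟩
  obtain ⟨x, hx⟩ := hcov q (mem_univ q)
  exact ⟨i x, (huv x).symm.mono (image_subset_iff.2 fun y hy => (hx hy).2) fun y hy => (hx hy).1⟩

lemma exists_subset_ball_of_diam_lt {X : Type*} [PseudoMetricSpace X] [Nonempty X] {S : Set X}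
    (hS : Bornology.IsBounded S) {e : ℝ} (h : diam S < e) : ∃ q, S ⊆ ball q e := by
  rcases S.eq_empty_or_nonempty with rfl | ⟨q, hq⟩
  · exact ⟨Classical.arbitrary X, empty_subset _⟩
  · exact ⟨q, fun x hx => mem_ball.2 ((dist_le_diam_of_mem hS hx hq).trans_lt h)⟩

lemma coe_add_int (t : ℝ) (k : ℤ) : ((t + k : ℝ) : Circle') = t := by
  rw [AddCircle.coe_add, add_eq_left, AddCircle.coe_eq_zero_iff]
  exact ⟨k, by simp⟩

lemma coe_eq_coe_iff {s t : ℝ} : (s : Circle') = t ↔ ∃ k : ℤ, t = s + k := by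
  rw [QuotientAddGroup.eq, AddSubgroup.mem_zmultiples_iff]
  constructor
  · rintro ⟨k, hk⟩
    exact ⟨k, by simp only [zsmul_eq_mul, mul_one] at hk; linarith⟩
  · rintro ⟨k, rfl⟩
    exact ⟨k, by simp⟩

lemma dist_coe_le_abs_sub (s t : ℝ) : dist (s : Circle') t ≤ |s - t| := by
  rw [dist_eq_norm, ← AddCircle.coe_sub, UnitAddCircle.norm_eq]
  simpa using round_le (s - t) 0

lemma exists_coe_eq_abs_sub_eq_dist (y : Circle') (c : ℝ) :
    ∃ t : ℝ, (t : Circle') = y ∧ |t - c| = dist y c := by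
  induction y using QuotientAddGroup.induction_on with
  | H x =>
    refine ⟨x + (-round (x - c) : ℤ), coe_add_int x _, ?_⟩
    rw [dist_eq_norm, ← AddCircle.coe_sub, UnitAddCircle.norm_eq]
    push_cast
    ring_nf

def Arc (a b : ℝ) : Set Circle' := (↑) '' Icc a b

lemma coe_mem_arc {a b t : ℝ} (ha : a ≤ t) (hb : t ≤ b) : (t : Circle') ∈ Arc a b :=
  ⟨t, ⟨ha, hb⟩, rfl⟩

lemma arc_mono {a b c d : ℝ} (hac : a ≤ c) (hdb : d ≤ b) : Arc c d ⊆ Arc a b :=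
  image_mono (Icc_subset_Icc hac hdb)

lemma isClosed_arc (a b : ℝ) : IsClosed (Arc a b) :=
  (isCompact_Icc.image (AddCircle.continuous_mk' 1)).isClosed

lemma arc_ne_univ {a b : ℝ} (h : b - a < 1) : Arc a b ≠ univ := by
  intro hu
  obtain ⟨s, hs, hcoe⟩ := hu.symm ▸ mem_univ (((a + b + 1) / 2 : ℝ) : Circle')
  obtain ⟨k, hk⟩ := coe_eq_coe_iff.mp hcoe
  have h0 : (0 : ℝ) < k := by linarith [hs.2]
  have h1 : (k : ℝ) < 1 := by linarith [hs.1]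
  norm_cast at h0 h1
  omega

lemma diam_arc_le {a b : ℝ} (h : a ≤ b) : diam (Arc a b) ≤ b - a := by
  refine diam_le_of_forall_dist_le (by linarith) ?_
  rintro _ ⟨s, hs, rfl⟩ _ ⟨t, ht, rfl⟩
  refine (dist_coe_le_abs_sub s t).trans (abs_sub_le_iff.mpr ⟨?_, ?_⟩) <;>
    linarith [hs.1, hs.2, ht.1, ht.2]

lemma half_le_diam_arc {a b : ℝ} (h : a + 1 / 2 ≤ b) : 1 / 2 ≤ diam (Arc a b) := by
  have hdist : dist (a : Circle') ((a + 1 / 2 : ℝ) : Circle') = 1 / 2 := by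
    rw [dist_eq_norm, ← AddCircle.coe_sub, UnitAddCircle.norm_eq]
    norm_num [round_eq]
  rw [← hdist]
  exact dist_le_diam_of_mem isBounded_of_compactSpace (coe_mem_arc le_rfl (by linarith))
    (coe_mem_arc (by linarith) h)

lemma exists_arc_length_eq_dist (x y : Circle') :
    ∃ a b : ℝ, a ≤ b ∧ b - a = dist x y ∧ x ∈ Arc a b ∧ y ∈ Arc a b := by
  induction x using QuotientAddGroup.induction_on with
  | H s =>
    obtain ⟨t, rfl, ht⟩ := exists_coe_eq_abs_sub_eq_dist y s
    refine ⟨min s t, max s t, min_le_max, ?_, coe_mem_arc (min_le_left _ _) (le_max_left _ _),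
      coe_mem_arc (min_le_right _ _) (le_max_right _ _)⟩
    rw [max_sub_min_eq_abs, dist_comm, ← ht]

lemma ball_subset_arc (c r : ℝ) : ball (c : Circle') r ⊆ Arc (c - r) (c + r) := by
  intro y hy
  obtain ⟨t, rfl, ht⟩ := exists_coe_eq_abs_sub_eq_dist y c
  have := abs_lt.mp (ht.trans_lt (mem_ball.mp hy))
  exact coe_mem_arc (by linarith) (by linarith)

lemma exists_mem_ball_subset_arc {t : Finset Circle'} {r a b : ℝ}
    (ht : univ ⊆ ⋃ c ∈ t, ball c r) (hab : 4 * r ≤ b - a) : ∃ c ∈ t, ball c r ⊆ Arc a b := by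
  obtain ⟨c, hct, hc⟩ := mem_iUnion₂.1 (ht (mem_univ (((a + b) / 2 : ℝ) : Circle')))
  refine ⟨c, hct, fun y hy => ?_⟩
  have hy' : y ∈ ball (((a + b) / 2 : ℝ) : Circle') (2 * r) := mem_ball.2 <|
    (dist_triangle y c _).trans_lt (by linarith [mem_ball.1 hy, mem_ball'.1 hc])
  exact arc_mono (by linarith) (by linarith) (ball_subset_arc _ _ hy')

lemma volume_le_ofReal_two_mul_diam (S : Set Circle') : volume S ≤ ENNReal.ofReal (2 * diam S) := by
  rcases S.eq_empty_or_nonempty with rfl | ⟨x, hx⟩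
  · simp
  calc volume S ≤ volume (closedBall x (diam S)) := measure_mono fun y hy =>
        mem_closedBall.2 (dist_le_diam_of_mem isBounded_of_compactSpace hy hx)
    _ = ENNReal.ofReal (min 1 (2 * diam S)) := AddCircle.volume_closedBall (T := 1) _
    _ ≤ ENNReal.ofReal (2 * diam S) := ENNReal.ofReal_le_ofReal (min_le_right _ _)

/-- Cover the circle by `N` balls of radius `ε`; their images under a surjection cover the circle,
so they cannot all have diameter below `1 / (2N)`. -/
lemma exists_forall_surjective_exists_le_diam_image_ball {ε : ℝ} (hε : 0 < ε) :
    ∃ η > 0, ∀ f : Circle' → Circle', Surjective f → ∃ x, η ≤ diam (f '' ball x ε) := by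
  obtain ⟨t, ht⟩ := isCompact_univ.elim_finite_subcover (fun c : Circle' => ball c ε)
    (fun _ => isOpen_ball) (fun x _ => mem_iUnion.2 ⟨x, mem_ball_self hε⟩)
  set N : ℝ := t.card + 1
  refine ⟨1 / (4 * N), by positivity, fun f hf => ?_⟩
  by_contra! hsmall
  have hcover : univ ⊆ ⋃ c ∈ t, f '' ball c ε := by
    rw [← hf.range_eq, ← image_univ]
    exact (image_mono ht).trans (image_iUnion₂ _ _).subset
  have hvol : (1 : ℝ≥0∞) ≤ ENNReal.ofReal (t.card * (2 * (1 / (4 * N)))) :=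
    calc (1 : ℝ≥0∞) = volume (univ : Set Circle') := by simp [AddCircle.measure_univ]
      _ ≤ ∑ c ∈ t, volume (f '' ball c ε) :=
          (measure_mono hcover).trans (measure_biUnion_finset_le _ _)
      _ ≤ ∑ _c ∈ t, ENNReal.ofReal (2 * (1 / (4 * N))) := Finset.sum_le_sum fun c _ =>
          (volume_le_ofReal_two_mul_diam _).trans
            (ENNReal.ofReal_le_ofReal (by linarith [hsmall c]))
      _ = ENNReal.ofReal (t.card * (2 * (1 / (4 * N)))) := by
          rw [Finset.sum_const, nsmul_eq_mul, ← ENNReal.ofReal_natCast,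
            ← ENNReal.ofReal_mul (Nat.cast_nonneg _)]
  have hN : (t.card : ℝ) * (2 * (1 / (4 * N))) < 1 := by
    rw [show (t.card : ℝ) * (2 * (1 / (4 * N))) = t.card / (2 * N) by field_simp; ring,
      div_lt_one (by positivity)]
    linarith
  exact (ENNReal.ofReal_lt_one.2 hN).not_ge hvol

def lowestLift (r : ℝ) (Y : Set Circle') : ℝ :=
  sInf {t ∈ Icc (-r) r | (t : Circle') ∈ Y}

def IsLift (h : Circle' ≃ₜ Circle') (F : ℝ ≃ₜ ℝ) : Prop :=
  StrictMono F ∧ (∀ x : ℝ, F (x + 1) = F x + 1) ∧ ∀ x : ℝ, h (x : Circle') = ((F x : ℝ) : Circle')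

lemma isOrientationPreserving_iff_exists_isLift (h : Circle' ≃ₜ Circle') :
    IsOrientationPreserving h ↔ ∃ F, IsLift h F :=
  Iff.rfl

lemma Monotone.eq_of_apply_eq_add_intCast {F : ℝ → ℝ} (hF : Monotone F) {r : ℝ} (hr : r ≤ 1 / 8)
    (hshort : F r - F (-r) < 1 / 2) {t₁ t₂ s₁ s₂ : ℝ} {k₁ k₂ : ℤ} (ht₁ : t₁ ∈ Icc (-r) r)
    (ht₂ : t₂ ∈ Icc (-r) r) (hs₁ : s₁ ∈ Icc (-r) r) (hs₂ : s₂ ∈ Icc (-r) r)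
    (h₁ : F t₁ = s₁ + k₁) (h₂ : F t₂ = s₂ + k₂) : k₁ = k₂ := by
  have := hF ht₁.1; have := hF ht₁.2; have := hF ht₂.1; have := hF ht₂.2
  have hlt : ((k₁ - k₂ : ℤ) : ℝ) < 1 := by push_cast; linarith [hs₁.1, hs₂.2]
  have hgt : (-1 : ℝ) < ((k₁ - k₂ : ℤ) : ℝ) := by push_cast; linarith [hs₁.2, hs₂.1]
  norm_cast at hlt hgt
  omega

namespace IsLift

variable {h : Circle' ≃ₜ Circle'} {F : ℝ ≃ₜ ℝ}

lemma monotone (hF : IsLift h F) : Monotone F := hF.1.monotone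

lemma apply_coe (hF : IsLift h F) (x : ℝ) : h (x : Circle') = ((F x : ℝ) : Circle') := hF.2.2 x

lemma image_arc (hF : IsLift h F) (a b : ℝ) : h '' Arc a b = Arc (F a) (F b) := by
  have hcomp : h ∘ ((↑) : ℝ → Circle') = (↑) ∘ F := funext hF.apply_coe
  rw [Arc, Arc, image_image, ← comp_def, hcomp, image_comp]
  congr 1
  simpa using (hF.1.orderIsoOfSurjective F F.surjective).image_Icc a b

lemma diam_image_arc_le (hF : IsLift h F) {a b : ℝ} (hab : a ≤ b) :
    diam (h '' Arc a b) ≤ F b - F a := by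
  rw [hF.image_arc]
  exact diam_arc_le (hF.monotone hab)

/-- On the lifts of `Y` to `[-r, r]`, a single integer `k` makes `F - k` a monotone permutation,
so `F - k` fixes the least lift. -/
lemma apply_coe_lowestLift (hF : IsLift h F) {r : ℝ} (hr : r ≤ 1 / 8)
    (hshort : diam (h '' Arc (-r) r) < 1 / 2) {Y : Set Circle'} (hYc : IsClosed Y)
    (hYne : Y.Nonempty) (hY : Y ⊆ Arc (-r) r) (hhY : h '' Y = Y) :
    h (lowestLift r Y) = lowestLift r Y := by
  set Y' := {t ∈ Icc (-r) r | (t : Circle') ∈ Y}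
  have hbdd : BddBelow Y' := ⟨-r, fun t ht => ht.1.1⟩
  have hlift : ∀ y ∈ Y, ∃ t ∈ Y', (t : Circle') = y := fun y hy => by
    obtain ⟨t, ht, rfl⟩ := hY hy
    exact ⟨t, ⟨ht, hy⟩, rfl⟩
  have ha : lowestLift r Y ∈ Y' := by
    obtain ⟨t, ht, -⟩ := hlift _ hYne.some_mem
    exact (isClosed_Icc.inter (hYc.preimage (AddCircle.continuous_mk' 1))).csInf_mem ⟨t, ht⟩ hbdd
  set a := lowestLift r Y
  have hlen : F r - F (-r) < 1 / 2 := by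
    by_contra! H
    rw [hF.image_arc] at hshort
    exact (half_le_diam_arc (by linarith)).not_gt hshort
  have hha : h a ∈ Y := hhY ▸ mem_image_of_mem h ha.2
  obtain ⟨a₁, ha₁, hka₁⟩ := hlift _ hha
  obtain ⟨k, hk⟩ := coe_eq_coe_iff.1 (hka₁.trans (hF.apply_coe a))
  obtain ⟨y, hy, hya⟩ : (a : Circle') ∈ h '' Y := by rw [hhY]; exact ha.2
  obtain ⟨t, ht, rfl⟩ := hlift y hy
  obtain ⟨m, hm⟩ := coe_eq_coe_iff.1 ((hF.apply_coe t).symm.trans hya).symm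
  have hmk : m = k := hF.monotone.eq_of_apply_eq_add_intCast hr hlen ht.1 ha.1 ha.1 ha₁.1 hm hk
  have hat : a ≤ t := csInf_le hbdd ht
  have hle : F a ≤ F t := hF.monotone hat
  have hge : a ≤ a₁ := csInf_le hbdd ha₁
  rw [hF.apply_coe, show F a = a + k by subst hmk; linarith]
  exact coe_add_int a k

end IsLift

section Commensuration

variable {Λ : Type*} [Group Λ]

def Commensurates (Γ : Subgroup Λ) : Prop :=
  ∀ l : Λ, (Subgroup.map (MulAut.conj l⁻¹).toMonoidHom Γ).relIndex Γ ≠ 0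

lemma mem_map_conj_iff {H : Subgroup Λ} {l x : Λ} :
    x ∈ H.map (MulAut.conj l).toMonoidHom ↔ l⁻¹ * x * l ∈ H := by
  rw [Subgroup.mem_map_equiv, MulAut.conj_symm_apply]

lemma Commensurates.relIndex_inf_map_conj_ne_zero {Γ Δ : Subgroup Λ} (hΓ : Commensurates Γ)
    (l : Λ) (hΔ : Δ.relIndex Γ ≠ 0) :
    (Γ ⊓ Δ.map (MulAut.conj l).toMonoidHom).relIndex Γ ≠ 0 := by
  have hconjΓ : (Γ.map (MulAut.conj l).toMonoidHom).relIndex Γ ≠ 0 := by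
    simpa only [inv_inv] using hΓ l⁻¹
  have hconjΔ : (Δ.map (MulAut.conj l).toMonoidHom).relIndex
      (Γ.map (MulAut.conj l).toMonoidHom) ≠ 0 := by
    rwa [Subgroup.relIndex_map_map_of_injective _ _ (MulAut.conj l).injective]
  rw [inf_comm, Subgroup.inf_relIndex_right]
  exact Subgroup.relIndex_ne_zero_trans hconjΔ hconjΓ

lemma finite_range_of_forall_mem_fixed {X : Type*} [TopologicalSpace X] (ρ : Λ →* (X ≃ₜ X))
    {Γ Δ : Subgroup Λ} (hΔ : Δ.relIndex Γ ≠ 0) {q : X} (hq : ∀ d ∈ Δ, ρ d q = q) :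
    (range fun γ : Γ => ρ γ q).Finite := by
  have : (Δ.subgroupOf Γ).FiniteIndex := ⟨hΔ⟩
  refine (finite_range fun c : Γ ⧸ Δ.subgroupOf Γ => ρ c.out q).subset ?_
  rintro _ ⟨γ, rfl⟩
  obtain ⟨d, hd⟩ := QuotientGroup.mk_out_eq_mul (Δ.subgroupOf Γ) γ
  refine ⟨γ, ?_⟩
  simp only [hd, Subgroup.coe_mul, map_mul, homeo_mul_apply, hq _ (Subgroup.mem_subgroupOf.1 d.2)]

end Commensuration

section Compressible

variable {Λ : Type*} [Group Λ] (Γ : Subgroup Λ) (ρ : Λ →* (Circle' ≃ₜ Circle'))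

def IsCompressible (S : Set Circle') : Prop :=
  ∀ ε > 0, ∃ g ∈ Γ, diam (ρ g '' S) < ε

variable {Γ ρ}

lemma IsCompressible.mono {S T : Set Circle'} (hST : S ⊆ T) (hT : IsCompressible Γ ρ T) :
    IsCompressible Γ ρ S := fun ε hε =>
  let ⟨g, hg, hgT⟩ := hT ε hε
  ⟨g, hg, (diam_mono (image_mono hST) isBounded_of_compactSpace).trans_lt hgT⟩

lemma not_isCompressible_iff {S : Set Circle'} :
    ¬ IsCompressible Γ ρ S ↔ ∃ η > 0, ∀ g ∈ Γ, η ≤ diam (ρ g '' S) := by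
  simp only [IsCompressible, not_forall, not_exists, not_and, not_lt, exists_prop]

/-- Write an element of `Γ` as a coset representative times an element of `Δ`; the finitely many
representatives are uniformly equicontinuous. -/
lemma IsCompressible.of_relIndex_ne_zero {Δ : Subgroup Λ} {S : Set Circle'}
    (hS : IsCompressible Γ ρ S) (hΔ : Δ.relIndex Γ ≠ 0) : IsCompressible Δ ρ S := by
  intro ε hε
  have : (Δ.subgroupOf Γ).FiniteIndex := ⟨hΔ⟩
  obtain ⟨δ, hδ, hsmall⟩ := (uniformEquicontinuous_of_finite
    fun c : Γ ⧸ Δ.subgroupOf Γ => ρ (c.out : Λ)⁻¹).exists_forall_diam_image_lt hε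
  obtain ⟨γ, hγ, hγS⟩ := hS δ hδ
  obtain ⟨d, hd⟩ := QuotientGroup.mk_out_eq_mul (Δ.subgroupOf Γ) ⟨γ, hγ⟩
  refine ⟨((d : Γ) : Λ)⁻¹, Δ.inv_mem (Subgroup.mem_subgroupOf.1 d.2), ?_⟩
  have hdinv : ((d : Γ) : Λ)⁻¹ = (((⟨γ, hγ⟩ : Γ) : Γ ⧸ Δ.subgroupOf Γ).out : Λ)⁻¹ * γ := by
    rw [hd, Subgroup.coe_mul]
    group
  rw [hdinv, map_mul, homeo_mul_image]
  exact hsmall _ _ isBounded_of_compactSpace hγS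

lemma IsCompressible.image (hΓ : Commensurates Γ) {S : Set Circle'} (hS : IsCompressible Γ ρ S)
    (l : Λ) : IsCompressible Γ ρ (ρ l '' S) := by
  intro ε hε
  obtain ⟨δ, hδ, hsmall⟩ :=
    (uniformEquicontinuous_of_finite fun _ : Unit => ρ l).exists_forall_diam_image_lt hε
  obtain ⟨d, hd, hdS⟩ :=
    hS.of_relIndex_ne_zero (hΓ.relIndex_inf_map_conj_ne_zero (Δ := Γ) l⁻¹ (by simp)) δ hδ
  obtain ⟨-, hdconj⟩ := Subgroup.mem_inf.1 hd
  rw [mem_map_conj_iff, inv_inv] at hdconj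
  refine ⟨l * d * l⁻¹, hdconj, ?_⟩
  rw [← homeo_mul_image, ← map_mul, show l * d * l⁻¹ * l = l * d by group, map_mul,
    homeo_mul_image]
  exact hsmall () _ isBounded_of_compactSpace hdS

lemma IsCompressible.of_isClosed (hΓ : Commensurates Γ) (hmsp : IsMinimalStronglyProximal ρ)
    {c : Circle'} {r : ℝ} (hr : 0 < r) (hball : IsCompressible Γ ρ (ball c r)) {K : Set Circle'}
    (hK : IsClosed K) (hKu : K ≠ univ) : IsCompressible Γ ρ K := by
  obtain ⟨l, hl⟩ := hmsp K hK hKu (ball c r) isOpen_ball (nonempty_ball.2 hr)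
  simpa only [map_inv, homeo_inv_image_image] using (hball.mono hl).image hΓ l⁻¹

lemma exists_mem_disjoint_image_ball {e : ℝ} (he : 0 < e)
    (hdisp : ∀ q, ∃ g ∈ Γ, Disjoint (ρ g '' ball q (2 * e)) (ball q (2 * e)))
    {K : Set Circle'} (hK : IsCompressible Γ ρ K) (q : Circle') :
    ∃ γ ∈ Γ, Disjoint (ρ γ '' K) (ball q e) := by
  obtain ⟨γ, hγ, hγK⟩ := hK e he
  by_cases hdisj : Disjoint (ρ γ '' K) (ball q e)
  · exact ⟨γ, hγ, hdisj⟩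
  obtain ⟨z, hzK, hzq⟩ := not_disjoint_iff.1 hdisj
  have hsub : ρ γ '' K ⊆ ball q (2 * e) := fun w hw => mem_ball.2 <|
    calc dist w q ≤ dist w z + dist z q := dist_triangle w z q
      _ < e + e := add_lt_add
          ((dist_le_diam_of_mem isBounded_of_compactSpace hw hzK).trans_lt hγK) (mem_ball.1 hzq)
      _ = 2 * e := by ring
  obtain ⟨g, hg, hgq⟩ := hdisp q
  refine ⟨g * γ, Γ.mul_mem hg hγ, ?_⟩
  rw [map_mul, homeo_mul_image]
  exact (hgq.mono_left (image_mono hsub)).mono_right (ball_subset_ball (by linarith))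

theorem isMinimalStronglyProximal_of_isCompressible_ball (hΓ : Commensurates Γ)
    (hmsp : IsMinimalStronglyProximal ρ)
    (horb : ∀ p : Circle', (range fun γ : Γ => ρ (γ : Λ) p).Infinite)
    {c : Circle'} {r : ℝ} (hr : 0 < r) (hball : IsCompressible Γ ρ (ball c r)) :
    IsMinimalStronglyProximal (ρ.comp Γ.subtype) := by
  obtain ⟨e, he, hdisp⟩ : ∃ e > 0, ∀ q, ∃ g ∈ Γ, Disjoint (ρ g '' ball q e) (ball q e) := by
    have hmove (x : Circle') : ∃ γ : Γ, ρ γ x ≠ x := by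
      by_contra! hfix
      exact horb x ((finite_singleton x).subset (range_subset_iff.2 hfix))
    obtain ⟨e, he, h⟩ := exists_forall_exists_disjoint_image_ball (fun γ : Γ => ⇑(ρ γ))
      (fun γ => (ρ γ).continuous) hmove
    exact ⟨e, he, fun q => let ⟨γ, hγ⟩ := h q; ⟨γ, γ.2, hγ⟩⟩
  intro K hK hKu U hU ⟨u, hu⟩
  obtain ⟨s, hs, hsU⟩ := Metric.isOpen_iff.1 hU u hu
  have hCu : (ball u s)ᶜ ≠ univ := fun h =>
    (h.symm ▸ mem_univ u : u ∈ (ball u s)ᶜ) (mem_ball_self hs)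
  obtain ⟨g, hg, hgC⟩ := (hball.of_isClosed hΓ hmsp hr isOpen_ball.isClosed_compl hCu) (e / 2)
    (half_pos he)
  obtain ⟨q, hq⟩ := exists_subset_ball_of_diam_lt isBounded_of_compactSpace hgC
  obtain ⟨γ, hγ, hγK⟩ := exists_mem_disjoint_image_ball (half_pos he)
    (by simpa only [mul_div_cancel₀ e two_ne_zero] using hdisp)
    (hball.of_isClosed hΓ hmsp hr hK hKu) q
  have hγKs : ρ γ '' K ⊆ ρ g '' ball u s := by
    rw [← compl_compl (ball u s), image_compl_eq (ρ g).bijective]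
    exact fun z hzK hzC => hγK.ne_of_mem hzK (hq hzC) rfl
  refine ⟨⟨g⁻¹ * γ, Γ.mul_mem (Γ.inv_mem hg) hγ⟩, ?_⟩
  change ρ (g⁻¹ * γ) '' K ⊆ U
  rw [map_mul, homeo_mul_image, map_inv]
  exact ((homeo_inv_image_subset_iff _).2 hγKs).trans hsU

end Compressible

section Incompressible

variable {Λ : Type*} [Group Λ] {Γ : Subgroup Λ} {ρ : Λ →* (Circle' ≃ₜ Circle')}

/-- If `g` stretches two nearby points far apart, the image of the short arc joining them is long,
so it contains one of finitely many fixed balls, which `g⁻¹` then compresses. -/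
lemma uniformEquicontinuous_of_forall_not_isCompressible
    (hop : ∀ l : Λ, IsOrientationPreserving (ρ l))
    (hbad : ∀ c : Circle', ∀ r > 0, ¬ IsCompressible Γ ρ (ball c r)) :
    UniformEquicontinuous fun g : Γ => ⇑(ρ g) := by
  rw [Metric.uniformEquicontinuous_iff]
  intro ε hε
  obtain ⟨t, ht⟩ := isCompact_univ.elim_finite_subcover (fun c : Circle' => ball c (ε / 4))
    (fun _ => isOpen_ball) (fun x _ => mem_iUnion.2 ⟨x, mem_ball_self (by positivity)⟩)
  have hη : ∀ c ∈ t, ∀ᶠ δ in 𝓝[>] (0 : ℝ), ∀ g ∈ Γ, δ < diam (ρ g '' ball c (ε / 4)) := by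
    intro c _
    obtain ⟨η, hη, h⟩ := not_isCompressible_iff.1 (hbad c (ε / 4) (by positivity))
    filter_upwards [Ioo_mem_nhdsGT hη] with δ hδ g hg using hδ.2.trans_le (h g hg)
  obtain ⟨δ, hδt, hδ⟩ := (((Filter.eventually_all_finset t).2 hη).and self_mem_nhdsWithin).exists
  refine ⟨δ, hδ, fun x y hxy g => ?_⟩
  by_contra! hfar
  obtain ⟨a, b, hab, hlen, hx, hy⟩ := exists_arc_length_eq_dist x y
  obtain ⟨F, hF⟩ := (isOrientationPreserving_iff_exists_isLift _).1 (hop g)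
  have hlong : ε ≤ F b - F a := hfar.trans <|
    (dist_le_diam_of_mem isBounded_of_compactSpace (mem_image_of_mem _ hx)
      (mem_image_of_mem _ hy)).trans (hF.diam_image_arc_le hab)
  obtain ⟨c, hct, hc⟩ := exists_mem_ball_subset_arc ht (by linarith : 4 * (ε / 4) ≤ F b - F a)
  have hsub : ρ (g⁻¹ : Γ) '' ball c (ε / 4) ⊆ Arc a b := by
    rw [Subgroup.coe_inv, map_inv, homeo_inv_image_subset_iff, hF.image_arc]
    exact hc
  have := (hδt c hct _ (Γ.inv_mem g.2)).trans_le
    ((diam_mono hsub isBounded_of_compactSpace).trans (diam_arc_le hab))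
  linarith

/-- Push `X` into a short arc by some `l`; then `Γ ∩ l Δ l⁻¹` preserves `l X` and, by
equicontinuity, fixes its leftmost point, which contradicts the infinite `Γ`-orbits. -/
theorem eq_univ_of_isClosed_of_forall_image_eq (hΓ : Commensurates Γ)
    (hop : ∀ l : Λ, IsOrientationPreserving (ρ l)) (hmsp : IsMinimalStronglyProximal ρ)
    (horb : ∀ p : Circle', (range fun γ : Γ => ρ (γ : Λ) p).Infinite)
    (hequi : UniformEquicontinuous fun g : Γ => ⇑(ρ g)) {Δ : Subgroup Λ}
    (hΔ : Δ.relIndex Γ ≠ 0) {X : Set Circle'} (hXc : IsClosed X) (hXne : X.Nonempty)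
    (hX : ∀ d ∈ Δ, ρ d '' X = X) : X = univ := by
  by_contra hXu
  obtain ⟨δ, hδ, hsmall⟩ := hequi.exists_forall_diam_image_lt one_half_pos
  set r := min (δ / 4) (1 / 8)
  have hr : 0 < r := by positivity
  obtain ⟨l, hl⟩ := hmsp X hXc hXu (ball ((0 : ℝ) : Circle') r) isOpen_ball (nonempty_ball.2 hr)
  have hYarc : ρ l '' X ⊆ Arc (-r) r := by simpa using hl.trans (ball_subset_arc 0 r)
  have hfix : ∀ g ∈ Γ ⊓ Δ.map (MulAut.conj l).toMonoidHom,
      ρ g (lowestLift r (ρ l '' X)) = lowestLift r (ρ l '' X) := by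
    intro g hg
    obtain ⟨hgΓ, hgΔ⟩ := Subgroup.mem_inf.1 hg
    obtain ⟨F, hF⟩ := (isOrientationPreserving_iff_exists_isLift _).1 (hop g)
    refine hF.apply_coe_lowestLift (min_le_right _ _) ?_ ((ρ l).isClosedMap X hXc)
      (hXne.image _) hYarc ?_
    · exact hsmall ⟨g, hgΓ⟩ _ isBounded_of_compactSpace
        ((diam_arc_le (by linarith)).trans_lt (by linarith [min_le_left (δ / 4) (1 / 8)]))
    · rw [← homeo_mul_image, ← map_mul, show g * l = l * (l⁻¹ * g * l) by group, map_mul,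
        homeo_mul_image, hX _ (mem_map_conj_iff.1 hgΔ)]
  exact horb _ (finite_range_of_forall_mem_fixed ρ (hΓ.relIndex_inf_map_conj_ne_zero l hΔ) hfix)

lemma dense_range_apply_of_relIndex_ne_zero (hΓ : Commensurates Γ)
    (hop : ∀ l : Λ, IsOrientationPreserving (ρ l)) (hmsp : IsMinimalStronglyProximal ρ)
    (horb : ∀ p : Circle', (range fun γ : Γ => ρ (γ : Λ) p).Infinite)
    (hequi : UniformEquicontinuous fun g : Γ => ⇑(ρ g)) {Δ : Subgroup Λ}
    (hΔ : Δ.relIndex Γ ≠ 0) (p : Circle') : Dense (range fun d : Δ => ρ d p) := by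
  refine dense_iff_closure_eq.2 (eq_univ_of_isClosed_of_forall_image_eq hΓ hop hmsp horb hequi hΔ
    isClosed_closure ⟨p, subset_closure ⟨1, by simp⟩⟩ fun d hd => ?_)
  have hleft : ⇑(ρ d) ∘ (fun d' : Δ => ρ d' p) = (fun d' : Δ => ρ d' p) ∘ (⟨d, hd⟩ * ·) := by
    ext d'
    simp
  rw [(ρ d).image_closure, ← range_comp, hleft, (mul_left_surjective _).range_comp]

lemma exists_ball_subset_image_arc (hop : ∀ l : Λ, IsOrientationPreserving (ρ l))
    (hbad : ∀ c : Circle', ∀ r > 0, ¬ IsCompressible Γ ρ (ball c r)) :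
    ∃ ε > 0, ∀ g ∈ Γ, ∀ x, dist (ρ g x) ((0 : ℝ) : Circle') < 1 / 24 →
      ball x ε ⊆ ρ g⁻¹ '' Arc (-1 / 8) (1 / 8) := by
  obtain ⟨η₁, hη₁, h₁⟩ :=
    not_isCompressible_iff.1 (hbad ((-1 / 12 : ℝ) : Circle') (1 / 24) (by norm_num))
  obtain ⟨η₂, hη₂, h₂⟩ :=
    not_isCompressible_iff.1 (hbad ((1 / 12 : ℝ) : Circle') (1 / 24) (by norm_num))
  refine ⟨min η₁ η₂, lt_min hη₁ hη₂, fun g hg x hx => ?_⟩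
  obtain ⟨F, hF⟩ := (isOrientationPreserving_iff_exists_isLift _).1 (hop g⁻¹)
  have hflank {c η : ℝ} (h : ∀ g ∈ Γ, η ≤ diam (ρ g '' ball (c : Circle') (1 / 24))) :
      η ≤ F (c + 1 / 24) - F (c - 1 / 24) :=
    (h _ (Γ.inv_mem hg)).trans <| (diam_mono (image_mono (ball_subset_arc c _))
      isBounded_of_compactSpace).trans (hF.diam_image_arc_le (by linarith))
  have hleft : η₁ ≤ F (-1 / 24) - F (-1 / 8) := by
    have := hflank h₁
    rwa [show (-1 / 12 : ℝ) + 1 / 24 = -1 / 24 by norm_num,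
      show (-1 / 12 : ℝ) - 1 / 24 = -1 / 8 by norm_num] at this
  have hright : η₂ ≤ F (1 / 8) - F (1 / 24) := by
    have := hflank h₂
    rwa [show (1 / 12 : ℝ) + 1 / 24 = 1 / 8 by norm_num,
      show (1 / 12 : ℝ) - 1 / 24 = 1 / 24 by norm_num] at this
  obtain ⟨w, hw, hwd⟩ := exists_coe_eq_abs_sub_eq_dist (ρ g x) 0
  have hw' : |w - 0| < 1 / 24 := hwd ▸ hx
  rw [sub_zero, abs_lt] at hw'
  have hxw : x = (F w : Circle') := by
    rw [← hF.apply_coe, hw, map_inv]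
    exact ((ρ g).symm_apply_apply x).symm
  rw [hF.image_arc, hxw]
  refine (ball_subset_arc _ _).trans (arc_mono ?_ ?_)
  · linarith [hF.monotone (show -1 / 24 ≤ w by linarith), min_le_left η₁ η₂]
  · linarith [hF.monotone (show w ≤ 1 / 24 by linarith), min_le_right η₁ η₂]

/-- Choose `l` shrinking `A = [-1/8, 1/8]`. Every `ε`-ball lies in some `d⁻¹ A` with `d` in
`Γ ∩ l⁻¹ Γ l`, and `l d⁻¹ A = g⁻¹ (l A)` with `g ∈ Γ`, so by equicontinuity `l` shrinks every
`ε`-ball, which no surjection can do. -/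
theorem false_of_forall_not_isCompressible (hΓ : Commensurates Γ)
    (hop : ∀ l : Λ, IsOrientationPreserving (ρ l)) (hmsp : IsMinimalStronglyProximal ρ)
    (horb : ∀ p : Circle', (range fun γ : Γ => ρ (γ : Λ) p).Infinite)
    (hbad : ∀ c : Circle', ∀ r > 0, ¬ IsCompressible Γ ρ (ball c r)) : False := by
  have hequi := uniformEquicontinuous_of_forall_not_isCompressible hop hbad
  obtain ⟨ε, hε, hcover⟩ := exists_ball_subset_image_arc hop hbad
  obtain ⟨η, hη, hshrink⟩ := exists_forall_surjective_exists_le_diam_image_ball hε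
  obtain ⟨δ, hδ, hsmall⟩ := hequi.exists_forall_diam_image_lt hη
  obtain ⟨l, hl⟩ := hmsp _ (isClosed_arc (-1 / 8) (1 / 8)) (arc_ne_univ (by norm_num))
    (ball ((0 : ℝ) : Circle') (δ / 4)) isOpen_ball (nonempty_ball.2 (by positivity))
  have hlA : diam (ρ l '' Arc (-1 / 8) (1 / 8)) < δ :=
    (diam_mono hl isBounded_of_compactSpace).trans_lt
      ((diam_ball (by positivity)).trans_lt (by linarith))
  obtain ⟨x, hx⟩ := hshrink (ρ l) (ρ l).surjective
  obtain ⟨_, hd0, ⟨d, rfl⟩⟩ := (dense_range_apply_of_relIndex_ne_zero hΓ hop hmsp horb hequi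
    (hΓ.relIndex_inf_map_conj_ne_zero (Δ := Γ) l⁻¹ (by simp)) x).inter_open_nonempty _
    isOpen_ball (nonempty_ball.2 (by norm_num : (0 : ℝ) < 1 / 24))
  obtain ⟨hdΓ, hdconj⟩ := Subgroup.mem_inf.1 d.2
  rw [mem_map_conj_iff, inv_inv] at hdconj
  have hsub : ρ l '' ball x ε ⊆ ρ (l * d * l⁻¹)⁻¹ '' (ρ l '' Arc (-1 / 8) (1 / 8)) := by
    rw [← homeo_mul_image, ← map_mul, show (l * d * l⁻¹)⁻¹ * l = l * (d : Λ)⁻¹ by group, map_mul,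
      homeo_mul_image]
    exact image_mono (hcover d hdΓ x (mem_ball.1 hd0))
  exact (hsmall ⟨_, Γ.inv_mem hdconj⟩ _ isBounded_of_compactSpace hlA).not_ge
    (hx.trans (diam_mono hsub isBounded_of_compactSpace))

end Incompressible

/-- If `Λ` commensurates its subgroup `Γ` and acts on the circle minimally and strongly
proximally by orientation-preserving homeomorphisms, with every `Γ`-orbit infinite, then the
restricted `Γ`-action is also minimal and strongly proximal. -/
theorem statement14 {Λ : Type*} [Group Λ] (Γ : Subgroup Λ)
    (hcomm : ∀ l : Λ, (Subgroup.map (MulAut.conj l⁻¹).toMonoidHom Γ).relIndex Γ ≠ 0)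
    (ρ : Λ →* (Circle' ≃ₜ Circle'))
    (hop : ∀ l : Λ, IsOrientationPreserving (ρ l))
    (hmsp : IsMinimalStronglyProximal ρ)
    (horb : ∀ p : Circle', (Set.range fun γ : Γ => ρ (γ : Λ) p).Infinite) :
    IsMinimalStronglyProximal (ρ.comp Γ.subtype) := by
  by_cases hgood : ∃ c : Circle', ∃ r > 0, IsCompressible Γ ρ (ball c r)
  · obtain ⟨c, r, hr, hball⟩ := hgood
    exact isMinimalStronglyProximal_of_isCompressible_ball hcomm hmsp horb hr hball
  · push Not at hgood
    exact (false_of_forall_not_isCompressible hcomm hop hmsp horb hgood).elim
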